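/- arXiv:2212.01505 — 4 statements merged into one kernel-verified Lean document; each statement's English description precedes it below -/
import Mathlib

section
/- Let K ⊆ ℝⁿ and V ⊆ ℝᵐ be nonempty closed convex sets, let ρ > 0, and let L : ℝⁿ × ℝᵐ → ℝ be continuously differentiable with L(·,y) convex for every y and L(x,·) concave for every x, and assume L admits at least one saddle point (x♯,y♯) ∈ K × V (i.e. L(x♯,y) ≤ L(x♯,y♯) ≤ L(x,y♯) for all x ∈ K, y ∈ V). Suppose x, z : [0,∞) → ℝⁿ and y, w : [0,∞) → ℝᵐ are differentiable curves with x(0), z(0) ∈ K, y(0), w(0) ∈ V, which for every t ≥ 0 satisfy the projected regularized saddle-flow dynamics ẋ(t) = Π_K[x(t), −∇ₓL(x(t),y(t)) − (x(t)−z(t))/ρ], ż(t) = Π_K[z(t), (x(t)−z(t))/ρ], ẏ(t) = Π_V[y(t), ∇_yL(x(t),y(t)) − (y(t)−w(t))/ρ], ẇ(t) = Π_V[w(t), (y(t)−w(t))/ρ], where each projected vector field exists as the stated one-sided limit. Then x(t) ∈ K and y(t) ∈ V for all t ≥ 0, and there exists a saddle point (x*,y*) of L on K × V such that (x(t), z(t),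 y(t), w(t)) → (x*, x*, y*, y*) as t → ∞. -/
/-!
For a saddle point `(p, q)`, the squared distance of `(x, z, y, w)` to `(p, p, q, q)` is a
Lyapunov function: the variational inequality of the projection together with the gradient
inequalities of convexity and concavity bound its derivative by
`-(2 / ρ) (‖x - z‖² + ‖y - w‖²)`. So the trajectory is bounded; its velocity, dominated by the
unprojected field, is then bounded too, which makes this defect uniformly continuous, and a
Barbalat argument sends it to `0`. Take a limit point along integer times `t k`. Since `z` and `w`
move at speed at most `‖x - z‖ / ρ` and `‖y - w‖ / ρ`, all four curves converge uniformly on the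
windows `[t k, t k + 1]`, and comparing `‖x - p‖²` at the two ends of these windows turns the
variational inequalities into the first-order saddle conditions at the limit. Centred at that
saddle point, the Lyapunov function is nonincreasing and tends to `0` along `t k`, hence along the
whole trajectory.
-/

open Filter Set

/-- Metric projection onto a set: the nearest point of `K` to `y`
(well defined when `K` is nonempty, closed and convex). -/
noncomputable def metricProj {E : Type*} [NormedAddCommGroup E] [InnerProductSpace ℝ E]
    (K : Set E) (y : E) : E :=
  Classical.epsilon fun p => p ∈ K ∧ ∀ z ∈ K, ‖y - p‖ ≤ ‖y - z‖

/-- `IsVFProj K x v w` : the vector field projection `Π_K[x,v]` exists and equals `w`,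
i.e. `(Ψ_K(x + δ v) - x)/δ → w` as `δ → 0⁺`. -/
def IsVFProj {E : Type*} [NormedAddCommGroup E] [InnerProductSpace ℝ E]
    (K : Set E) (x v w : E) : Prop :=
  Tendsto (fun δ : ℝ => δ⁻¹ • (metricProj K (x + δ • v) - x))
    (nhdsWithin 0 (Set.Ioi 0)) (nhds w)

/-- `IsSaddlePoint L K V x y` : `(x,y)` is a saddle point of `L` on `K × V`
(minimizing in `x`, maximizing in `y`). -/
def IsSaddlePoint {E F : Type*} (L : E → F → ℝ) (K : Set E) (V : Set F) (x : E) (y : F) : Prop :=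
  x ∈ K ∧ y ∈ V ∧ ∀ x' ∈ K, ∀ y' ∈ V, L x y' ≤ L x y ∧ L x y ≤ L x' y

open Topology
open scoped RealInnerProductSpace

section MetricProjection

variable {E : Type*} [NormedAddCommGroup E] [InnerProductSpace ℝ E] [CompleteSpace E] {K : Set E}

theorem metricProj_mem_and_inner_le (hne : K.Nonempty) (hcl : IsClosed K) (hcv : Convex ℝ K)
    (y : E) :
    metricProj K y ∈ K ∧ ∀ q ∈ K, ⟪y - metricProj K y, q - metricProj K y⟫ ≤ 0 := by
  have : Nonempty K := hne.to_subtype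
  have hbdd : BddBelow (Set.range fun q : K => ‖y - q‖) :=
    ⟨0, Set.forall_mem_range.2 fun _ => norm_nonneg _⟩
  obtain ⟨p, hpK, hp⟩ := exists_norm_eq_iInf_of_complete_convex hne hcl.isComplete hcv y
  have hspec : metricProj K y ∈ K ∧ ∀ q ∈ K, ‖y - metricProj K y‖ ≤ ‖y - q‖ :=
    Classical.epsilon_spec (p := fun p => p ∈ K ∧ ∀ q ∈ K, ‖y - p‖ ≤ ‖y - q‖)
      ⟨p, hpK, fun q hq => hp ▸ ciInf_le hbdd ⟨q, hq⟩⟩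
  refine ⟨hspec.1, (norm_eq_iInf_iff_real_inner_le_zero hcv hspec.1).1 ?_⟩
  exact le_antisymm (le_ciInf fun q => hspec.2 q q.2) (ciInf_le hbdd ⟨_, hspec.1⟩)

/-- The variational inequality of the projection at `x + δ • v`, divided by `δ > 0`. -/
theorem inner_sub_diffQuot_metricProj_le (hne : K.Nonempty) (hcl : IsClosed K) (hcv : Convex ℝ K)
    {x v p : E} {δ : ℝ} (hδ : 0 < δ) (hp : p ∈ K) :
    ⟪v - δ⁻¹ • (metricProj K (x + δ • v) - x), p - metricProj K (x + δ • v)⟫ ≤ 0 := by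
  have h := (metricProj_mem_and_inner_le hne hcl hcv (x + δ • v)).2 p hp
  have heq : x + δ • v - metricProj K (x + δ • v) =
      δ • (v - δ⁻¹ • (metricProj K (x + δ • v) - x)) := by
    rw [smul_sub, smul_smul, mul_inv_cancel₀ hδ.ne', one_smul]; abel
  rw [heq, real_inner_smul_left] at h
  exact nonpos_of_mul_nonpos_right h hδ

end MetricProjection

namespace IsVFProj

variable {E : Type*} [NormedAddCommGroup E] [InnerProductSpace ℝ E] {K : Set E} {x v d : E}

theorem tendsto_metricProj (h : IsVFProj K x v d) :
    Tendsto (fun δ : ℝ => metricProj K (x + δ • v)) (𝓝[>] 0) (𝓝 x) := by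
  have hlim : Tendsto (fun δ : ℝ => x + δ • (δ⁻¹ • (metricProj K (x + δ • v) - x)))
      (𝓝[>] 0) (𝓝 (x + (0 : ℝ) • d)) :=
    tendsto_const_nhds.add ((tendsto_nhdsWithin_of_tendsto_nhds tendsto_id).smul h)
  rw [zero_smul, add_zero] at hlim
  refine hlim.congr' (eventually_nhdsWithin_of_forall fun δ (hδ : 0 < δ) => ?_)
  rw [smul_smul, mul_inv_cancel₀ hδ.ne', one_smul, add_sub_cancel]

variable [CompleteSpace E]

theorem mem (hne : K.Nonempty) (hcl : IsClosed K) (hcv : Convex ℝ K) (h : IsVFProj K x v d) :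
    x ∈ K :=
  hcl.mem_of_tendsto h.tendsto_metricProj
    (Eventually.of_forall fun _ => (metricProj_mem_and_inner_le hne hcl hcv _).1)

theorem inner_le (hne : K.Nonempty) (hcl : IsClosed K) (hcv : Convex ℝ K) (h : IsVFProj K x v d)
    {p : E} (hp : p ∈ K) : ⟪d, x - p⟫ ≤ ⟪v, x - p⟫ := by
  have hlim : Tendsto
      (fun δ : ℝ => ⟪v - δ⁻¹ • (metricProj K (x + δ • v) - x), p - metricProj K (x + δ • v)⟫)
      (𝓝[>] 0) (𝓝 ⟪v - d, p - x⟫) :=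
    (tendsto_const_nhds.sub h).inner (tendsto_const_nhds.sub h.tendsto_metricProj)
  have hle : ⟪v - d, p - x⟫ ≤ 0 := le_of_tendsto hlim
    (eventually_nhdsWithin_of_forall fun δ hδ => inner_sub_diffQuot_metricProj_le hne hcl hcv hδ hp)
  rw [← neg_sub x p, inner_neg_right, inner_sub_left] at hle
  linarith

theorem norm_le (hne : K.Nonempty) (hcl : IsClosed K) (hcv : Convex ℝ K) (h : IsVFProj K x v d) :
    ‖d‖ ≤ ‖v‖ := by
  refine le_of_tendsto h.norm (eventually_nhdsWithin_of_forall fun δ (hδ : 0 < δ) => ?_)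
  set u := δ⁻¹ • (metricProj K (x + δ • v) - x)
  have hvi := inner_sub_diffQuot_metricProj_le hne hcl hcv (x := x) (v := v) hδ (h.mem hne hcl hcv)
  have hP : x - metricProj K (x + δ • v) = -(δ • u) := by
    simp only [u, smul_smul, mul_inv_cancel₀ hδ.ne', one_smul, neg_sub]
  rw [hP, inner_neg_right, real_inner_smul_right, inner_sub_left,
    real_inner_self_eq_norm_sq] at hvi
  have hcs := real_inner_le_norm v u
  have hu : ‖u‖ ^ 2 ≤ ‖v‖ * ‖u‖ := by nlinarith
  nlinarith [norm_nonneg u, norm_nonneg v]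

end IsVFProj

section Calculus

theorem sub_le_mul_sub_of_hasDerivAt_le {f f' : ℝ → ℝ} {a b C : ℝ} (hab : a ≤ b)
    (hf : ∀ t ∈ Icc a b, HasDerivAt f (f' t) t) (hf' : ∀ t ∈ Icc a b, f' t ≤ C) :
    f b - f a ≤ C * (b - a) := by
  have hint : ∀ t ∈ interior (Icc a b), t ∈ Icc a b := fun t ht => interior_subset ht
  refine (convex_Icc a b).image_sub_le_mul_sub_of_deriv_le
    (fun t ht => (hf t ht).continuousAt.continuousWithinAt)
    (fun t ht => (hf t (hint t ht)).differentiableAt.differentiableWithinAt)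
    (fun t ht => (hf t (hint t ht)).deriv ▸ hf' t (hint t ht)) a (left_mem_Icc.2 hab) b
    (right_mem_Icc.2 hab) hab

theorem antitoneOn_Ici_of_hasDerivAt_nonpos {f f' : ℝ → ℝ} {a : ℝ}
    (hf : ∀ t, a ≤ t → HasDerivAt f (f' t) t) (hf' : ∀ t, a ≤ t → f' t ≤ 0) :
    AntitoneOn f (Ici a) := fun s hs t _ hst => by
  have := sub_le_mul_sub_of_hasDerivAt_le hst (fun u hu => hf u (le_trans hs hu.1))
    (fun u hu => hf' u (le_trans hs hu.1))
  linarith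

theorem uniformContinuousOn_Ici_of_norm_hasDerivAt_le {X : Type*} [NormedAddCommGroup X]
    [NormedSpace ℝ X] {γ γ' : ℝ → X} {a M : ℝ} (hγ : ∀ t, a ≤ t → HasDerivAt γ (γ' t) t)
    (hM : ∀ t, a ≤ t → ‖γ' t‖ ≤ M) : UniformContinuousOn γ (Ici a) :=
  ((convex_Ici a).lipschitzOnWith_of_nnnorm_hasDerivWithin_le (C := ‖M‖₊)
    (fun t ht => (hγ t ht).hasDerivWithinAt) fun t ht => by
      rw [← NNReal.coe_le_coe, coe_nnnorm, coe_nnnorm]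
      exact (hM t ht).trans (Real.le_norm_self M)).uniformContinuousOn

theorem AntitoneOn.exists_tendsto_atTop {f : ℝ → ℝ} {a : ℝ} (hf : AntitoneOn f (Ici a))
    (hbdd : BddBelow (f '' Ici a)) : ∃ l, Tendsto f atTop (𝓝 l) := by
  have hanti : Antitone fun t => f (max t a) := fun s t hst =>
    hf (le_max_right s a) (le_max_right t a) (max_le_max_right a hst)
  have hbdd' : BddBelow (range fun t => f (max t a)) :=
    hbdd.mono (range_subset_iff.2 fun t => mem_image_of_mem f (le_max_right t a))
  refine ⟨_, (tendsto_atTop_ciInf hanti hbdd').congr' ?_⟩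
  filter_upwards [eventually_ge_atTop a] with t ht
  rw [max_eq_left ht]

/-- A variant of Barbalat's lemma: if `S t ≥ ε`, uniform continuity keeps `S ≥ ε / 2` on
`[t, t + δ / 2]`, so `V` drops by a fixed amount there, which is impossible once `V` converges. -/
theorem tendsto_zero_of_hasDerivAt_le_neg_mul {V V' S : ℝ → ℝ} {c : ℝ} (hc : 0 < c)
    (hV : ∀ t, 0 ≤ t → HasDerivAt V (V' t) t) (hV' : ∀ t, 0 ≤ t → V' t ≤ -(c * S t))
    (hVbdd : BddBelow (V '' Ici 0)) (hS : ∀ t, 0 ≤ t → 0 ≤ S t)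
    (hSuc : UniformContinuousOn S (Ici 0)) : Tendsto S atTop (𝓝 0) := by
  obtain ⟨l, hl⟩ := (antitoneOn_Ici_of_hasDerivAt_nonpos hV fun t ht => by
    nlinarith [hV' t ht, hS t ht]).exists_tendsto_atTop hVbdd
  refine tendsto_order.2 ⟨fun b hb => ?_, fun ε hε => ?_⟩
  · filter_upwards [eventually_ge_atTop 0] with t ht using lt_of_lt_of_le hb (hS t ht)
  obtain ⟨δ, hδ, hSδ⟩ := Metric.uniformContinuousOn_iff.1 hSuc (ε / 2) (half_pos hε)
  have hdrop : Tendsto (fun t => V t - V (t + δ / 2)) atTop (𝓝 (l - l)) :=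
    hl.sub (hl.comp (tendsto_atTop_add_const_right _ _ tendsto_id))
  rw [sub_self] at hdrop
  filter_upwards [eventually_ge_atTop 0,
    hdrop.eventually (gt_mem_nhds (by positivity : 0 < c * (ε / 2) * (δ / 2)))]
    with t ht hsmall
  by_contra! hSt
  have hwin : ∀ u ∈ Icc t (t + δ / 2), V' u ≤ -(c * (ε / 2)) := fun u hu => by
    have hu0 : 0 ≤ u := le_trans ht hu.1
    have hclose := hSδ u hu0 t ht (by
      rw [Real.dist_eq, abs_of_nonneg (by linarith [hu.1])]; linarith [hu.2])
    rw [Real.dist_eq] at hclose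
    nlinarith [hV' u hu0, abs_lt.1 hclose]
  have := sub_le_mul_sub_of_hasDerivAt_le (by linarith) (fun u hu => hV u (le_trans ht hu.1)) hwin
  nlinarith

theorem tendsto_of_norm_sub_sq_le {α E : Type*} [SeminormedAddCommGroup E] {l : Filter α}
    {f : α → E} {a : E} {g : α → ℝ} (hfg : ∀ᶠ t in l, ‖f t - a‖ ^ 2 ≤ g t)
    (hg : Tendsto g l (𝓝 0)) : Tendsto f l (𝓝 a) := by
  rw [tendsto_iff_norm_sub_tendsto_zero]
  have hsqrt : Tendsto (fun t => Real.sqrt (g t)) l (𝓝 0) := by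
    simpa using hg.sqrt
  refine squeeze_zero' (Eventually.of_forall fun t => norm_nonneg _) ?_ hsqrt
  filter_upwards [hfg] with t ht
  exact Real.le_sqrt_of_sq_le ht

end Calculus

section Gradients

variable {E F : Type*} [NormedAddCommGroup E] [InnerProductSpace ℝ E]
  [NormedAddCommGroup F] [InnerProductSpace ℝ F]

theorem ConvexOn.sub_le_inner_of_hasGradientAt [CompleteSpace E] {s : Set E} {f : E → ℝ}
    {g a b : E}
    (hf : ConvexOn ℝ s f) (ha : a ∈ s) (hb : b ∈ s) (hg : HasGradientAt f g a) :
    f a - f b ≤ ⟪g, a - b⟫ := by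
  set φ : ℝ →ᵃ[ℝ] E := AffineMap.lineMap a b
  have hg' : HasFDerivAt f (InnerProductSpace.toDual ℝ E g) (φ 0) := by
    simpa [φ] using hg.hasFDerivAt
  have hline : HasDerivAt (f ∘ φ) ⟪g, b - a⟫ 0 :=
    hg'.comp_hasDerivAt (0 : ℝ) AffineMap.hasDerivAt_lineMap
  have hslope := (hf.comp_affineMap φ).le_slope_of_hasDerivAt
    (x := 0) (y := 1) (by simpa [φ] using ha) (by simpa [φ] using hb) one_pos hline
  rw [slope_def_field] at hslope
  simp only [φ, Function.comp_apply, AffineMap.lineMap_apply_zero, AffineMap.lineMap_apply_one,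
    sub_zero, div_one] at hslope
  rw [← neg_sub b a, inner_neg_right]
  linarith

theorem ConcaveOn.inner_le_sub_of_hasGradientAt [CompleteSpace E] {s : Set E} {f : E → ℝ}
    {g a b : E}
    (hf : ConcaveOn ℝ s f) (ha : a ∈ s) (hb : b ∈ s) (hg : HasGradientAt f g a) :
    ⟪g, a - b⟫ ≤ f a - f b := by
  have hneg : HasGradientAt (fun u => -f u) (-g) a := by
    rw [hasGradientAt_iff_hasFDerivAt, map_neg]
    exact hg.hasFDerivAt.neg
  have := hf.neg.sub_le_inner_of_hasGradientAt ha hb hneg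
  simp only [Pi.neg_apply, inner_neg_left] at this
  linarith

theorem ContDiff.continuous_gradient_left [CompleteSpace E] {f : E × F → ℝ} (hf : ContDiff ℝ 1 f) :
    Continuous fun p : E × F => gradient (fun u => f (u, p.2)) p.1 := by
  have hpartial : ∀ p : E × F, gradient (fun u => f (u, p.2)) p.1 =
      (InnerProductSpace.toDual ℝ E).symm ((fderiv ℝ f p).comp (ContinuousLinearMap.inl ℝ E F)) :=
    fun p => by
      have h : HasFDerivAt (fun u => f (u, p.2))
          ((fderiv ℝ f p).comp (ContinuousLinearMap.inl ℝ E F)) p.1 :=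
        (hf.differentiable one_ne_zero p).hasFDerivAt.comp p.1 (hasFDerivAt_prodMk_left p.1 p.2)
      rw [gradient, h.fderiv]
  simp only [hpartial]
  exact (InnerProductSpace.toDual ℝ E).symm.continuous.comp
    (((ContinuousLinearMap.compL ℝ E (E × F) ℝ).flip
      (ContinuousLinearMap.inl ℝ E F)).continuous.comp (hf.continuous_fderiv one_ne_zero))

theorem ContDiff.continuous_gradient_right [CompleteSpace F] {f : E × F → ℝ} (hf : ContDiff ℝ 1 f) :
    Continuous fun p : E × F => gradient (fun u => f (p.1, u)) p.2 :=
  (hf.comp (contDiff_snd.prodMk contDiff_fst)).continuous_gradient_left.comp continuous_swap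

end Gradients

section ProjectedFlow

variable {E : Type*} [NormedAddCommGroup E] [InnerProductSpace ℝ E] {K : Set E} {x v : ℝ → E}

/-- `x` solves `ẋ = Π_K[x, v]` on `[0, ∞)`. -/
def IsProjFlow (K : Set E) (x v : ℝ → E) : Prop :=
  ∀ t, 0 ≤ t → ∃ d, IsVFProj K (x t) (v t) d ∧ HasDerivAt x d t

/-- Convergence along `windows t` is uniform convergence on the windows `[t k, t k + 1]`
as `k → ∞`. -/
def windows (t : ℕ → ℝ) : Filter ℝ :=
  map (fun p : ℕ × ℝ => t p.1 + p.2) (atTop ×ˢ 𝓟 (Icc 0 1))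

theorem eventually_windows_iff {t : ℕ → ℝ} {P : ℝ → Prop} :
    (∀ᶠ s in windows t, P s) ↔ ∀ᶠ k in atTop, ∀ s ∈ Icc (t k) (t k + 1), P s := by
  simp only [windows, eventually_map, eventually_prod_principal_iff]
  refine eventually_congr (Eventually.of_forall fun k => ⟨fun h s hs => ?_, fun h s hs => ?_⟩)
  · simpa using h (s - t k) ⟨by linarith [hs.1], by linarith [hs.2]⟩
  · exact h _ ⟨by linarith [hs.1], by linarith [hs.2]⟩

theorem windows_le_atTop {t : ℕ → ℝ} (ht : Tendsto t atTop atTop) : windows t ≤ atTop :=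
  tendsto_id'.1 <| tendsto_atTop.2 fun a => eventually_windows_iff.2 <|
    (tendsto_atTop.1 ht a).mono fun _ hk _ hs => le_trans hk hs.1

theorem tendsto_add_windows (t : ℕ → ℝ) {s : ℝ} (hs : s ∈ Icc 0 1) :
    Tendsto (fun k => t k + s) atTop (windows t) :=
  tendsto_map.comp (tendsto_id.prodMk (tendsto_principal.2 (Eventually.of_forall fun _ => hs)))

namespace IsProjFlow

theorem hasDerivAt (h : IsProjFlow K x v) {t : ℝ} (ht : 0 ≤ t) : HasDerivAt x (deriv x t) t := by
  obtain ⟨d, -, hd⟩ := h t ht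
  exact hd.differentiableAt.hasDerivAt

theorem isVFProj (h : IsProjFlow K x v) {t : ℝ} (ht : 0 ≤ t) :
    IsVFProj K (x t) (v t) (deriv x t) := by
  obtain ⟨d, hd, hdx⟩ := h t ht
  rwa [hdx.deriv]

theorem hasDerivAt_norm_sub_sq (h : IsProjFlow K x v) {t : ℝ} (ht : 0 ≤ t) (p : E) :
    HasDerivAt (fun s => ‖x s - p‖ ^ 2) (2 * ⟪deriv x t, x t - p⟫) t := by
  simpa only [real_inner_comm] using ((h.hasDerivAt ht).sub_const p).norm_sq

variable [CompleteSpace E]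

theorem mem (hne : K.Nonempty) (hcl : IsClosed K) (hcv : Convex ℝ K) (h : IsProjFlow K x v)
    {t : ℝ} (ht : 0 ≤ t) : x t ∈ K :=
  (h.isVFProj ht).mem hne hcl hcv

theorem inner_deriv_le (hne : K.Nonempty) (hcl : IsClosed K) (hcv : Convex ℝ K)
    (h : IsProjFlow K x v) {t : ℝ} (ht : 0 ≤ t) {p : E} (hp : p ∈ K) :
    ⟪deriv x t, x t - p⟫ ≤ ⟪v t, x t - p⟫ :=
  (h.isVFProj ht).inner_le hne hcl hcv hp

theorem norm_deriv_le (hne : K.Nonempty) (hcl : IsClosed K) (hcv : Convex ℝ K)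
    (h : IsProjFlow K x v) {t : ℝ} (ht : 0 ≤ t) : ‖deriv x t‖ ≤ ‖v t‖ :=
  (h.isVFProj ht).norm_le hne hcl hcv

theorem tendsto_windows (hne : K.Nonempty) (hcl : IsClosed K) (hcv : Convex ℝ K)
    (h : IsProjFlow K x v) (hv : Tendsto v atTop (𝓝 0)) {t : ℕ → ℝ}
    (ht : Tendsto t atTop atTop) {a : E} (hxt : Tendsto (fun k => x (t k)) atTop (𝓝 a)) :
    Tendsto x (windows t) (𝓝 a) := by
  refine Metric.tendsto_nhds.2 fun ε hε => eventually_windows_iff.2 ?_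
  obtain ⟨T, hT⟩ := eventually_atTop.1 <| (eventually_ge_atTop 0).and
    ((tendsto_zero_iff_norm_tendsto_zero.1 hv).eventually (ge_mem_nhds (half_pos hε)))
  filter_upwards [ht.eventually_ge_atTop T, Metric.tendsto_nhds.1 hxt (ε / 2) (half_pos hε)]
    with k hk hxk s hs
  have hmv : ‖x s - x (t k)‖ ≤ ε / 2 * ‖s - t k‖ :=
    (convex_Icc (t k) (t k + 1)).norm_image_sub_le_of_norm_hasDerivWithin_le
      (fun u hu => (h.hasDerivAt (hT u (hk.trans hu.1)).1).hasDerivWithinAt)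
      (fun u hu => (h.norm_deriv_le hne hcl hcv (hT u (hk.trans hu.1)).1).trans
        (hT u (hk.trans hu.1)).2)
      (left_mem_Icc.2 (by linarith)) hs
  have hst : ‖s - t k‖ ≤ 1 := by
    rw [Real.norm_eq_abs, abs_le]; constructor <;> linarith [hs.1, hs.2]
  have hstep : ‖x s - x (t k)‖ ≤ ε / 2 := by nlinarith
  linarith [dist_triangle (x s) (x (t k)) a, dist_eq_norm (x s) (x (t k))]

/-- If `⟪b, a - p⟫ < 0`, then `‖x - p‖ ^ 2` would drop by a fixed amount across each late window,
although it converges at both ends of the windows. -/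
theorem inner_nonneg_of_tendsto_windows (hne : K.Nonempty) (hcl : IsClosed K) (hcv : Convex ℝ K)
    (h : IsProjFlow K x v) {t : ℕ → ℝ} (ht : Tendsto t atTop atTop) {a b : E}
    (hx : Tendsto x (windows t) (𝓝 a)) (hv : Tendsto v (windows t) (𝓝 b)) {p : E}
    (hp : p ∈ K) : 0 ≤ ⟪b, a - p⟫ := by
  by_contra! hneg
  have hev : ∀ᶠ s in windows t, 0 ≤ s ∧ ⟪v s, x s - p⟫ < ⟪b, a - p⟫ / 2 :=
    ((eventually_ge_atTop 0).filter_mono (windows_le_atTop ht)).and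
      (Tendsto.eventually_lt_const (by linarith) (hv.inner (hx.sub_const p)))
  have hdrop : ∀ᶠ k in atTop, ‖x (t k + 1) - p‖ ^ 2 - ‖x (t k) - p‖ ^ 2 ≤ ⟪b, a - p⟫ := by
    filter_upwards [eventually_windows_iff.1 hev] with k hk
    have := sub_le_mul_sub_of_hasDerivAt_le (by linarith)
      (fun s hs => h.hasDerivAt_norm_sub_sq (hk s hs).1 p) (C := ⟪b, a - p⟫) fun s hs => by
        linarith [h.inner_deriv_le hne hcl hcv (hk s hs).1 hp, (hk s hs).2]
    simpa using this
  have hx0 : Tendsto (fun k => x (t k)) atTop (𝓝 a) := by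
    simpa [Function.comp_def] using hx.comp (tendsto_add_windows t (s := 0) ⟨le_rfl, zero_le_one⟩)
  have hx1 := hx.comp (tendsto_add_windows t (s := 1) ⟨zero_le_one, le_rfl⟩)
  have hlim := ((hx1.sub_const p).norm.pow 2).sub ((hx0.sub_const p).norm.pow 2)
  rw [sub_self] at hlim
  linarith [le_of_tendsto hlim hdrop]

end IsProjFlow

end ProjectedFlow

section SaddlePoints

variable {E F : Type*} [NormedAddCommGroup E] [InnerProductSpace ℝ E] [CompleteSpace E]
  [NormedAddCommGroup F] [InnerProductSpace ℝ F] [CompleteSpace F]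

theorem isSaddlePoint_of_inner_gradient {K : Set E} {V : Set F} {L : E → F → ℝ} {a : E} {b : F}
    (hconv : ConvexOn ℝ univ fun u => L u b) (hconc : ConcaveOn ℝ univ (L a))
    (hLa : DifferentiableAt ℝ (fun u => L u b) a) (hLb : DifferentiableAt ℝ (L a) b)
    (ha : a ∈ K) (hb : b ∈ V) (hK : ∀ p ∈ K, 0 ≤ ⟪-gradient (fun u => L u b) a, a - p⟫)
    (hV : ∀ q ∈ V, 0 ≤ ⟪gradient (L a) b, b - q⟫) : IsSaddlePoint L K V a b := by
  refine ⟨ha, hb, fun p hp q hq => ⟨?_, ?_⟩⟩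
  · linarith [hconc.inner_le_sub_of_hasGradientAt (mem_univ b) (mem_univ q) hLb.hasGradientAt,
      hV q hq]
  · have := hK p hp
    rw [inner_neg_left] at this
    linarith [hconv.sub_le_inner_of_hasGradientAt (mem_univ a) (mem_univ p) hLa.hasGradientAt]

end SaddlePoints

theorem inner_sub_smul_add_inner_smul {E : Type*} [NormedAddCommGroup E] [InnerProductSpace ℝ E]
    (g a b c : E) (r : ℝ) :
    ⟪g - r • (a - b), a - c⟫ + ⟪r • (a - b), b - c⟫ = ⟪g, a - c⟫ - r * ‖a - b‖ ^ 2 := by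
  have h : ⟪a - b, a - c⟫ - ⟪a - b, b - c⟫ = ‖a - b‖ ^ 2 := by
    rw [← inner_sub_right, sub_sub_sub_cancel_right, real_inner_self_eq_norm_sq]
  rw [inner_sub_left, real_inner_smul_left, real_inner_smul_left]
  linear_combination (-r) * h

namespace SaddleFlow

variable {E F : Type*} [SeminormedAddCommGroup E] [SeminormedAddCommGroup F]

def lyapunov (p : E) (q : F) (s : E × E × F × F) : ℝ :=
  ‖s.1 - p‖ ^ 2 + ‖s.2.1 - p‖ ^ 2 + ‖s.2.2.1 - q‖ ^ 2 + ‖s.2.2.2 - q‖ ^ 2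

def defect (s : E × E × F × F) : ℝ :=
  ‖s.1 - s.2.1‖ ^ 2 + ‖s.2.2.1 - s.2.2.2‖ ^ 2

variable {p : E} {q : F}

theorem lyapunov_nonneg (s : E × E × F × F) : 0 ≤ lyapunov p q s := by
  unfold lyapunov; positivity

theorem defect_nonneg (s : E × E × F × F) : 0 ≤ defect s := by
  unfold defect; positivity

theorem continuous_lyapunov : Continuous (lyapunov p q : E × E × F × F → ℝ) := by
  unfold lyapunov; fun_prop

theorem continuous_defect : Continuous (defect : E × E × F × F → ℝ) := by
  unfold defect; fun_prop

theorem lyapunov_self : lyapunov p q (p, p, q, q) = 0 := by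
  simp [lyapunov]

theorem norm_sub_sq_le_lyapunov (s : E × E × F × F) :
    ‖s - (p, p, q, q)‖ ^ 2 ≤ lyapunov p q s := by
  have h := lyapunov_nonneg (p := p) (q := q) s
  have hle : ‖s - (p, p, q, q)‖ ≤ Real.sqrt (lyapunov p q s) := by
    refine norm_prod_le_iff.2 ⟨?_, norm_prod_le_iff.2 ⟨?_, norm_prod_le_iff.2 ⟨?_, ?_⟩⟩⟩ <;>
      refine Real.le_sqrt_of_sq_le ?_ <;> simp only [lyapunov, Prod.fst_sub, Prod.snd_sub] <;>
      nlinarith [sq_nonneg ‖s.1 - p‖, sq_nonneg ‖s.2.1 - p‖, sq_nonneg ‖s.2.2.1 - q‖,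
        sq_nonneg ‖s.2.2.2 - q‖]
  calc ‖s - (p, p, q, q)‖ ^ 2 ≤ Real.sqrt (lyapunov p q s) ^ 2 := by gcongr
    _ = lyapunov p q s := Real.sq_sqrt h

theorem tendsto_sub_of_tendsto_defect {α : Type*} {l : Filter α} {s : α → E × E × F × F}
    (h : Tendsto (fun i => defect (s i)) l (𝓝 0)) :
    Tendsto (fun i => (s i).1 - (s i).2.1) l (𝓝 0) ∧
      Tendsto (fun i => (s i).2.2.1 - (s i).2.2.2) l (𝓝 0) := by
  refine ⟨tendsto_of_norm_sub_sq_le (Eventually.of_forall fun i => ?_) h,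
    tendsto_of_norm_sub_sq_le (Eventually.of_forall fun i => ?_) h⟩ <;>
  · simp only [sub_zero, defect]
    nlinarith [sq_nonneg ‖(s i).1 - (s i).2.1‖, sq_nonneg ‖(s i).2.2.1 - (s i).2.2.2‖]

end SaddleFlow

open SaddleFlow

section Dynamics

variable {E F : Type*} [NormedAddCommGroup E] [InnerProductSpace ℝ E] [CompleteSpace E]
  [NormedAddCommGroup F] [InnerProductSpace ℝ F] [CompleteSpace F]

structure IsSaddleFlow (K : Set E) (V : Set F) (L : E → F → ℝ) (ρ : ℝ) (x z : ℝ → E)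
    (y w : ℝ → F) : Prop where
  flow_x : IsProjFlow K x fun t => -gradient (fun u => L u (y t)) (x t) - ρ⁻¹ • (x t - z t)
  flow_z : IsProjFlow K z fun t => ρ⁻¹ • (x t - z t)
  flow_y : IsProjFlow V y fun t => gradient (fun u => L (x t) u) (y t) - ρ⁻¹ • (y t - w t)
  flow_w : IsProjFlow V w fun t => ρ⁻¹ • (y t - w t)

namespace IsSaddleFlow

variable {K : Set E} {V : Set F} {L : E → F → ℝ} {ρ : ℝ} {x z : ℝ → E} {y w : ℝ → F}

theorem hasDerivAt_lyapunov (h : IsSaddleFlow K V L ρ x z y w) {t : ℝ} (ht : 0 ≤ t) (p : E)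
    (q : F) :
    HasDerivAt (fun s => lyapunov p q (x s, z s, y s, w s))
      (2 * ⟪deriv x t, x t - p⟫ + 2 * ⟪deriv z t, z t - p⟫ + 2 * ⟪deriv y t, y t - q⟫ +
        2 * ⟪deriv w t, w t - q⟫) t :=
  (((h.flow_x.hasDerivAt_norm_sub_sq ht p).add (h.flow_z.hasDerivAt_norm_sub_sq ht p)).add
    (h.flow_y.hasDerivAt_norm_sub_sq ht q)).add (h.flow_w.hasDerivAt_norm_sub_sq ht q)

theorem deriv_lyapunov_le (hKne : K.Nonempty) (hKcl : IsClosed K) (hKcv : Convex ℝ K)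
    (hVne : V.Nonempty) (hVcl : IsClosed V) (hVcv : Convex ℝ V)
    (hL : Differentiable ℝ fun p : E × F => L p.1 p.2)
    (hconv : ∀ y, ConvexOn ℝ univ fun x => L x y) (hconc : ∀ x, ConcaveOn ℝ univ fun y => L x y)
    (h : IsSaddleFlow K V L ρ x z y w) {p : E} {q : F} (hpq : IsSaddlePoint L K V p q) {t : ℝ}
    (ht : 0 ≤ t) :
    deriv (fun s => lyapunov p q (x s, z s, y s, w s)) t ≤
      -(2 * ρ⁻¹ * defect (x t, z t, y t, w t)) := by
  rw [(h.hasDerivAt_lyapunov ht p q).deriv]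
  have hx := h.flow_x.inner_deriv_le hKne hKcl hKcv ht hpq.1
  have hz := h.flow_z.inner_deriv_le hKne hKcl hKcv ht hpq.1
  have hy := h.flow_y.inner_deriv_le hVne hVcl hVcv ht hpq.2.1
  have hw := h.flow_w.inner_deriv_le hVne hVcl hVcv ht hpq.2.1
  have hxz := inner_sub_smul_add_inner_smul
    (-gradient (fun u => L u (y t)) (x t)) (x t) (z t) p ρ⁻¹
  have hyw := inner_sub_smul_add_inner_smul
    (gradient (fun u => L (x t) u) (y t)) (y t) (w t) q ρ⁻¹
  have hgx := (hconv (y t)).sub_le_inner_of_hasGradientAt (mem_univ (x t)) (mem_univ p)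
    (by fun_prop : DifferentiableAt ℝ (fun u => L u (y t)) (x t)).hasGradientAt
  have hgy := (hconc (x t)).inner_le_sub_of_hasGradientAt (mem_univ (y t)) (mem_univ q)
    (by fun_prop : DifferentiableAt ℝ (fun u => L (x t) u) (y t)).hasGradientAt
  have hsad := hpq.2.2 (x t) (h.flow_x.mem hKne hKcl hKcv ht) (y t)
    (h.flow_y.mem hVne hVcl hVcv ht)
  -- the coupling terms collapse to `-ρ⁻¹ * defect`, the gradient terms to
  -- `L p (y t) - L (x t) q ≤ 0`
  rw [inner_neg_left] at hxz
  simp only [defect]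
  linarith [hsad.1, hsad.2]

theorem antitoneOn_lyapunov (hKne : K.Nonempty) (hKcl : IsClosed K) (hKcv : Convex ℝ K)
    (hVne : V.Nonempty) (hVcl : IsClosed V) (hVcv : Convex ℝ V) (hρ : 0 < ρ)
    (hL : Differentiable ℝ fun p : E × F => L p.1 p.2)
    (hconv : ∀ y, ConvexOn ℝ univ fun x => L x y) (hconc : ∀ x, ConcaveOn ℝ univ fun y => L x y)
    (h : IsSaddleFlow K V L ρ x z y w) {p : E} {q : F} (hpq : IsSaddlePoint L K V p q) :
    AntitoneOn (fun t => lyapunov p q (x t, z t, y t, w t)) (Ici 0) :=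
  antitoneOn_Ici_of_hasDerivAt_nonpos
    (fun t ht => (h.hasDerivAt_lyapunov ht p q).differentiableAt.hasDerivAt) fun t ht =>
      (h.deriv_lyapunov_le hKne hKcl hKcv hVne hVcl hVcv hL hconv hconc hpq ht).trans <| by
        have := defect_nonneg (x t, z t, y t, w t)
        have := inv_pos.2 hρ
        nlinarith

theorem mem_closedBall (hKne : K.Nonempty) (hKcl : IsClosed K) (hKcv : Convex ℝ K)
    (hVne : V.Nonempty) (hVcl : IsClosed V) (hVcv : Convex ℝ V) (hρ : 0 < ρ)
    (hL : Differentiable ℝ fun p : E × F => L p.1 p.2)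
    (hconv : ∀ y, ConvexOn ℝ univ fun x => L x y) (hconc : ∀ x, ConcaveOn ℝ univ fun y => L x y)
    (h : IsSaddleFlow K V L ρ x z y w) {p : E} {q : F} (hpq : IsSaddlePoint L K V p q) {t : ℝ}
    (ht : 0 ≤ t) :
    (x t, z t, y t, w t) ∈
      Metric.closedBall (p, p, q, q) (Real.sqrt (lyapunov p q (x 0, z 0, y 0, w 0))) := by
  rw [Metric.mem_closedBall, dist_eq_norm]
  refine Real.le_sqrt_of_sq_le ((norm_sub_sq_le_lyapunov _).trans ?_)
  exact h.antitoneOn_lyapunov hKne hKcl hKcv hVne hVcl hVcv hρ hL hconv hconc hpq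
    (mem_Ici.2 le_rfl) (mem_Ici.2 ht) ht

theorem tendsto_windows (hKne : K.Nonempty) (hKcl : IsClosed K) (hKcv : Convex ℝ K)
    (hVne : V.Nonempty) (hVcl : IsClosed V) (hVcv : Convex ℝ V)
    (h : IsSaddleFlow K V L ρ x z y w)
    (hdefect : Tendsto (fun t => defect (x t, z t, y t, w t)) atTop (𝓝 0))
    {t : ℕ → ℝ} (ht : Tendsto t atTop atTop) {a : E} {b : F}
    (hz : Tendsto (fun k => z (t k)) atTop (𝓝 a)) (hw : Tendsto (fun k => w (t k)) atTop (𝓝 b)) :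
    Tendsto x (windows t) (𝓝 a) ∧ Tendsto y (windows t) (𝓝 b) := by
  obtain ⟨hxz, hyw⟩ := tendsto_sub_of_tendsto_defect hdefect
  have hzw := h.flow_z.tendsto_windows hKne hKcl hKcv (by simpa using hxz.const_smul ρ⁻¹) ht hz
  have hww := h.flow_w.tendsto_windows hVne hVcl hVcv (by simpa using hyw.const_smul ρ⁻¹) ht hw
  exact ⟨by simpa using (hxz.mono_left (windows_le_atTop ht)).add hzw,
    by simpa using (hyw.mono_left (windows_le_atTop ht)).add hww⟩

theorem isSaddlePoint_of_tendsto (hKne : K.Nonempty) (hKcl : IsClosed K) (hKcv : Convex ℝ K)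
    (hVne : V.Nonempty) (hVcl : IsClosed V) (hVcv : Convex ℝ V)
    (hL : ContDiff ℝ 1 fun p : E × F => L p.1 p.2)
    (hconv : ∀ y, ConvexOn ℝ univ fun x => L x y) (hconc : ∀ x, ConcaveOn ℝ univ fun y => L x y)
    (h : IsSaddleFlow K V L ρ x z y w)
    (hdefect : Tendsto (fun t => defect (x t, z t, y t, w t)) atTop (𝓝 0))
    {t : ℕ → ℝ} (ht : Tendsto t atTop atTop) {a a' : E} {b b' : F}
    (hlim : Tendsto (fun k => (x (t k), z (t k), y (t k), w (t k))) atTop (𝓝 (a, a', b, b'))) :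
    a = a' ∧ b = b' ∧ IsSaddlePoint L K V a b := by
  obtain ⟨hxz, hyw⟩ := tendsto_sub_of_tendsto_defect hdefect
  have hx0 : Tendsto (fun k => x (t k)) atTop (𝓝 a) := hlim.fst_nhds
  have hz0 : Tendsto (fun k => z (t k)) atTop (𝓝 a') := hlim.snd_nhds.fst_nhds
  have hy0 : Tendsto (fun k => y (t k)) atTop (𝓝 b) := hlim.snd_nhds.snd_nhds.fst_nhds
  have hw0 : Tendsto (fun k => w (t k)) atTop (𝓝 b') := hlim.snd_nhds.snd_nhds.snd_nhds
  obtain rfl : a = a' := sub_eq_zero.1 (tendsto_nhds_unique (hx0.sub hz0) (hxz.comp ht))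
  obtain rfl : b = b' := sub_eq_zero.1 (tendsto_nhds_unique (hy0.sub hw0) (hyw.comp ht))
  obtain ⟨hx, hy⟩ := h.tendsto_windows hKne hKcl hKcv hVne hVcl hVcv hdefect ht hz0 hw0
  have hwin := windows_le_atTop ht
  have hgx := (hL.continuous_gradient_left.tendsto (a, b)).comp (hx.prodMk_nhds hy)
  have hgy := (hL.continuous_gradient_right.tendsto (a, b)).comp (hx.prodMk_nhds hy)
  have hLd := hL.differentiable one_ne_zero
  refine ⟨rfl, rfl, isSaddlePoint_of_inner_gradient (hconv b) (hconc a) (by fun_prop)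
    (by fun_prop)
    (hKcl.mem_of_tendsto hx0 (ht.eventually_ge_atTop 0 |>.mono fun k hk =>
      h.flow_x.mem hKne hKcl hKcv hk))
    (hVcl.mem_of_tendsto hy0 (ht.eventually_ge_atTop 0 |>.mono fun k hk =>
      h.flow_y.mem hVne hVcl hVcv hk))
    (fun p hp => h.flow_x.inner_nonneg_of_tendsto_windows hKne hKcl hKcv ht hx ?_ hp)
    (fun q hq => h.flow_y.inner_nonneg_of_tendsto_windows hVne hVcl hVcv ht hy ?_ hq)⟩
  · simpa using hgx.neg.sub ((hxz.mono_left hwin).const_smul ρ⁻¹)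
  · simpa using hgy.sub ((hyw.mono_left hwin).const_smul ρ⁻¹)

end IsSaddleFlow

end Dynamics

section FiniteDimensional

variable {E F : Type*} [NormedAddCommGroup E] [InnerProductSpace ℝ E] [FiniteDimensional ℝ E]
  [NormedAddCommGroup F] [InnerProductSpace ℝ F] [FiniteDimensional ℝ F]
  {K : Set E} {V : Set F} {L : E → F → ℝ} {ρ : ℝ} {x z : ℝ → E} {y w : ℝ → F}

namespace IsSaddleFlow

/-- The velocity is dominated by the unprojected field, which is bounded on the compact ball
that contains the trajectory. -/
theorem exists_norm_deriv_le (hKne : K.Nonempty) (hKcl : IsClosed K) (hKcv : Convex ℝ K)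
    (hVne : V.Nonempty) (hVcl : IsClosed V) (hVcv : Convex ℝ V) (hρ : 0 < ρ)
    (hL : ContDiff ℝ 1 fun p : E × F => L p.1 p.2)
    (hconv : ∀ y, ConvexOn ℝ univ fun x => L x y) (hconc : ∀ x, ConcaveOn ℝ univ fun y => L x y)
    (h : IsSaddleFlow K V L ρ x z y w) {p : E} {q : F} (hpq : IsSaddlePoint L K V p q) :
    ∃ M, ∀ t, 0 ≤ t → ‖(deriv x t, deriv z t, deriv y t, deriv w t)‖ ≤ M := by
  have hxy : Continuous fun s : E × E × F × F => (s.1, s.2.2.1) := by fun_prop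
  have hGx : Continuous fun s : E × E × F × F => gradient (fun u => L u s.2.2.1) s.1 :=
    hL.continuous_gradient_left.comp hxy
  have hGy : Continuous fun s : E × E × F × F => gradient (fun u => L s.1 u) s.2.2.1 :=
    hL.continuous_gradient_right.comp hxy
  set Φ : E × E × F × F → E × E × F × F := fun s =>
    (-gradient (fun u => L u s.2.2.1) s.1 - ρ⁻¹ • (s.1 - s.2.1), ρ⁻¹ • (s.1 - s.2.1),
      gradient (fun u => L s.1 u) s.2.2.1 - ρ⁻¹ • (s.2.2.1 - s.2.2.2), ρ⁻¹ • (s.2.2.1 - s.2.2.2))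
  have hΦ : Continuous Φ := by fun_prop
  obtain ⟨M, hM⟩ := (isCompact_closedBall (p, p, q, q)
    (Real.sqrt (lyapunov p q (x 0, z 0, y 0, w 0)))).exists_bound_of_continuousOn hΦ.continuousOn
  refine ⟨M, fun t ht => le_trans ?_ (hM _ (h.mem_closedBall hKne hKcl hKcv hVne hVcl hVcv hρ
    (hL.differentiable one_ne_zero) hconv hconc hpq ht))⟩
  refine norm_prod_le_iff.2 ⟨?_, norm_prod_le_iff.2 ⟨?_, norm_prod_le_iff.2 ⟨?_, ?_⟩⟩⟩
  · exact (h.flow_x.norm_deriv_le hKne hKcl hKcv ht).trans (norm_fst_le (Φ (x t, z t, y t, w t)))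
  · exact (h.flow_z.norm_deriv_le hKne hKcl hKcv ht).trans
      ((norm_fst_le (Φ (x t, z t, y t, w t)).2).trans (norm_snd_le _))
  · exact (h.flow_y.norm_deriv_le hVne hVcl hVcv ht).trans
      ((norm_fst_le (Φ (x t, z t, y t, w t)).2.2).trans ((norm_snd_le _).trans (norm_snd_le _)))
  · exact (h.flow_w.norm_deriv_le hVne hVcl hVcv ht).trans
      ((norm_snd_le (Φ (x t, z t, y t, w t)).2.2).trans ((norm_snd_le _).trans (norm_snd_le _)))

theorem tendsto_defect (hKne : K.Nonempty) (hKcl : IsClosed K) (hKcv : Convex ℝ K)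
    (hVne : V.Nonempty) (hVcl : IsClosed V) (hVcv : Convex ℝ V) (hρ : 0 < ρ)
    (hL : ContDiff ℝ 1 fun p : E × F => L p.1 p.2)
    (hconv : ∀ y, ConvexOn ℝ univ fun x => L x y) (hconc : ∀ x, ConcaveOn ℝ univ fun y => L x y)
    (h : IsSaddleFlow K V L ρ x z y w) {p : E} {q : F} (hpq : IsSaddlePoint L K V p q) :
    Tendsto (fun t => defect (x t, z t, y t, w t)) atTop (𝓝 0) := by
  have hLd := hL.differentiable one_ne_zero
  obtain ⟨M, hM⟩ := h.exists_norm_deriv_le hKne hKcl hKcv hVne hVcl hVcv hρ hL hconv hconc hpq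
  have hstate : UniformContinuousOn (fun t => (x t, z t, y t, w t)) (Ici 0) :=
    uniformContinuousOn_Ici_of_norm_hasDerivAt_le (fun t ht =>
      (h.flow_x.hasDerivAt ht).prodMk ((h.flow_z.hasDerivAt ht).prodMk
        ((h.flow_y.hasDerivAt ht).prodMk (h.flow_w.hasDerivAt ht)))) hM
  have hdefect : UniformContinuousOn (fun t => defect (x t, z t, y t, w t)) (Ici 0) :=
    ((isCompact_closedBall _ _).uniformContinuousOn_of_continuous
      (continuous_defect (E := E) (F := F)).continuousOn).comp hstate fun t ht =>
        h.mem_closedBall hKne hKcl hKcv hVne hVcl hVcv hρ hLd hconv hconc hpq ht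
  exact tendsto_zero_of_hasDerivAt_le_neg_mul (by positivity : 0 < 2 * ρ⁻¹)
    (fun t ht => (h.hasDerivAt_lyapunov ht p q).differentiableAt.hasDerivAt)
    (fun t ht => h.deriv_lyapunov_le hKne hKcl hKcv hVne hVcl hVcv hLd hconv hconc hpq ht)
    ⟨0, forall_mem_image.2 fun _ _ => lyapunov_nonneg _⟩ (fun _ _ => defect_nonneg _) hdefect

theorem exists_isSaddlePoint_tendsto (hKne : K.Nonempty) (hKcl : IsClosed K)
    (hKcv : Convex ℝ K) (hVne : V.Nonempty) (hVcl : IsClosed V) (hVcv : Convex ℝ V)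
    (hρ : 0 < ρ) (hL : ContDiff ℝ 1 fun p : E × F => L p.1 p.2)
    (hconv : ∀ y, ConvexOn ℝ univ fun x => L x y) (hconc : ∀ x, ConcaveOn ℝ univ fun y => L x y)
    (h : IsSaddleFlow K V L ρ x z y w) (hsaddle : ∃ p q, IsSaddlePoint L K V p q) :
    ∃ a b, IsSaddlePoint L K V a b ∧
      Tendsto (fun t => (x t, z t, y t, w t)) atTop (𝓝 (a, a, b, b)) := by
  have hLd := hL.differentiable one_ne_zero
  obtain ⟨p, q, hpq⟩ := hsaddle
  obtain ⟨⟨a, a', b, b'⟩, -, φ, hφ, hlim⟩ := tendsto_subseq_of_bounded Metric.isBounded_closedBall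
    fun k : ℕ => h.mem_closedBall hKne hKcl hKcv hVne hVcl hVcv hρ hLd hconv hconc hpq
      (Nat.cast_nonneg k)
  have ht : Tendsto (fun k => (φ k : ℝ)) atTop atTop :=
    tendsto_natCast_atTop_atTop.comp hφ.tendsto_atTop
  obtain ⟨rfl, rfl, hab⟩ := h.isSaddlePoint_of_tendsto hKne hKcl hKcv hVne hVcl hVcv hL hconv
    hconc (h.tendsto_defect hKne hKcl hKcv hVne hVcl hVcv hρ hL hconv hconc hpq) ht hlim
  obtain ⟨l, hl⟩ := (h.antitoneOn_lyapunov hKne hKcl hKcv hVne hVcl hVcv hρ hLd hconv hconc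
    hab).exists_tendsto_atTop ⟨0, forall_mem_image.2 fun _ _ => lyapunov_nonneg _⟩
  obtain rfl : l = 0 := tendsto_nhds_unique (hl.comp ht) <| by
    simpa [lyapunov_self, Function.comp_def] using
      ((continuous_lyapunov (p := a) (q := b)).tendsto _).comp hlim
  exact ⟨a, b, hab, tendsto_of_norm_sub_sq_le
    (Eventually.of_forall fun t => norm_sub_sq_le_lyapunov _) hl⟩

end IsSaddleFlow

end FiniteDimensional

theorem saddle_flow_convergence_general
    {n m : ℕ} (K : Set (EuclideanSpace ℝ (Fin n))) (V : Set (EuclideanSpace ℝ (Fin m)))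
    (hKne : K.Nonempty) (hKcl : IsClosed K) (hKcv : Convex ℝ K)
    (hVne : V.Nonempty) (hVcl : IsClosed V) (hVcv : Convex ℝ V)
    (ρ : ℝ) (hρ : 0 < ρ)
    (L : EuclideanSpace ℝ (Fin n) → EuclideanSpace ℝ (Fin m) → ℝ)
    (hL : ContDiff ℝ 1 (fun p : EuclideanSpace ℝ (Fin n) × EuclideanSpace ℝ (Fin m) =>
      L p.1 p.2))
    (hconv : ∀ y, ConvexOn ℝ Set.univ (fun x => L x y))
    (hconc : ∀ x, ConcaveOn ℝ Set.univ (fun y => L x y))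
    (hsaddle : ∃ xs ys, IsSaddlePoint L K V xs ys)
    (x z : ℝ → EuclideanSpace ℝ (Fin n)) (y w : ℝ → EuclideanSpace ℝ (Fin m))
    (hxdyn : ∀ t : ℝ, 0 ≤ t → ∃ d, IsVFProj K (x t)
      (-(gradient (fun u => L u (y t)) (x t)) - ρ⁻¹ • (x t - z t)) d ∧ HasDerivAt x d t)
    (hzdyn : ∀ t : ℝ, 0 ≤ t → ∃ d, IsVFProj K (z t) (ρ⁻¹ • (x t - z t)) d ∧ HasDerivAt z d t)
    (hydyn : ∀ t : ℝ, 0 ≤ t → ∃ d, IsVFProj V (y t)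
      ((gradient (fun u => L (x t) u) (y t)) - ρ⁻¹ • (y t - w t)) d ∧ HasDerivAt y d t)
    (hwdyn : ∀ t : ℝ, 0 ≤ t → ∃ d, IsVFProj V (w t) (ρ⁻¹ • (y t - w t)) d ∧
      HasDerivAt w d t) :
    (∀ t : ℝ, 0 ≤ t → x t ∈ K ∧ y t ∈ V) ∧
    ∃ xs ys, IsSaddlePoint L K V xs ys ∧
      Tendsto (fun t => (x t, z t, y t, w t)) atTop (nhds (xs, xs, ys, ys)) := by
  have h : IsSaddleFlow K V L ρ x z y w := ⟨hxdyn, hzdyn, hydyn, hwdyn⟩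
  exact ⟨fun t ht => ⟨h.flow_x.mem hKne hKcl hKcv ht, h.flow_y.mem hVne hVcl hVcv ht⟩,
    h.exists_isSaddlePoint_tendsto hKne hKcl hKcv hVne hVcl hVcv hρ hL hconv hconc hsaddle⟩

/-- **Theorem 1 (convergence of projected regularized saddle-flow dynamics).**
If `K ⊆ ℝⁿ`, `V ⊆ ℝᵐ` are nonempty closed convex sets, `L` is continuously differentiable,
convex in `x` and concave in `y`, and has a saddle point on `K × V`, then any trajectory of
the projected regularized saddle-flow dynamics initialized in `K × K × V × V` stays in
`K` (resp. `V`) and converges to a point `(x*, x*, y*, y*)` where `(x*,y*)` is a saddle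
point of `L` on `K × V`. -/
theorem saddle_flow_convergence
    {n m : ℕ} (K : Set (EuclideanSpace ℝ (Fin n))) (V : Set (EuclideanSpace ℝ (Fin m)))
    (hKne : K.Nonempty) (hKcl : IsClosed K) (hKcv : Convex ℝ K)
    (hVne : V.Nonempty) (hVcl : IsClosed V) (hVcv : Convex ℝ V)
    (ρ : ℝ) (hρ : 0 < ρ)
    (L : EuclideanSpace ℝ (Fin n) → EuclideanSpace ℝ (Fin m) → ℝ)
    (hL : ContDiff ℝ 1 (fun p : EuclideanSpace ℝ (Fin n) × EuclideanSpace ℝ (Fin m) =>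
      L p.1 p.2))
    (hconv : ∀ y, ConvexOn ℝ Set.univ (fun x => L x y))
    (hconc : ∀ x, ConcaveOn ℝ Set.univ (fun y => L x y))
    (hsaddle : ∃ xs ys, IsSaddlePoint L K V xs ys)
    (x z : ℝ → EuclideanSpace ℝ (Fin n)) (y w : ℝ → EuclideanSpace ℝ (Fin m))
    (hx0 : x 0 ∈ K) (hz0 : z 0 ∈ K) (hy0 : y 0 ∈ V) (hw0 : w 0 ∈ V)
    (hxdyn : ∀ t : ℝ, 0 ≤ t → ∃ d, IsVFProj K (x t)
      (-(gradient (fun u => L u (y t)) (x t)) - ρ⁻¹ • (x t - z t)) d ∧ HasDerivAt x d t)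
    (hzdyn : ∀ t : ℝ, 0 ≤ t → ∃ d, IsVFProj K (z t) (ρ⁻¹ • (x t - z t)) d ∧ HasDerivAt z d t)
    (hydyn : ∀ t : ℝ, 0 ≤ t → ∃ d, IsVFProj V (y t)
      ((gradient (fun u => L (x t) u) (y t)) - ρ⁻¹ • (y t - w t)) d ∧ HasDerivAt y d t)
    (hwdyn : ∀ t : ℝ, 0 ≤ t → ∃ d, IsVFProj V (w t) (ρ⁻¹ • (y t - w t)) d ∧
      HasDerivAt w d t) :
    (∀ t : ℝ, 0 ≤ t → x t ∈ K ∧ y t ∈ V) ∧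
    ∃ xs ys, IsSaddlePoint L K V xs ys ∧
      Tendsto (fun t => (x t, z t, y t, w t)) atTop (nhds (xs, xs, ys, ys)) :=
  saddle_flow_convergence_general K V hKne hKcl hKcv hVne hVcl hVcv ρ hρ L hL hconv hconc hsaddle x
    z y w hxdyn hzdyn hydyn hwdyn
end

section
/- Let K ⊆ ℝⁿ be a nonempty closed convex set, let a, b ∈ K and v ∈ ℝⁿ, and suppose w ∈ ℝⁿ is such that (Ψ_K(a + δv) − a)/δ → w as δ → 0⁺. Then ⟨b − a, v − w⟩ ≤ 0. -/
/-!
For `δ > 0` the point `p_δ = Ψ_K(a + δ v)` satisfies the variational inequality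
`⟪a + δ v - p_δ, b - p_δ⟫ ≤ 0`. Writing `p_δ = a + δ q_δ` and dividing by `δ` gives
`⟪b - a - δ q_δ, v - q_δ⟫ ≤ 0`; since `q_δ → w`, letting `δ → 0⁺` yields `⟪b - a, v - w⟫ ≤ 0`.
-/

open Filter Set

open Topology

lemma norm_sub_eq_iInf_iff_forall_norm_sub_le {E : Type*} [SeminormedAddCommGroup E]
    {K : Set E} {y p : E} (hp : p ∈ K) :
    ‖y - p‖ = ⨅ z : K, ‖y - z‖ ↔ ∀ z ∈ K, ‖y - p‖ ≤ ‖y - z‖ := by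
  have : Nonempty K := ⟨⟨p, hp⟩⟩
  have hbdd : BddBelow (range fun z : K => ‖y - z‖) :=
    ⟨0, forall_mem_range.2 fun _ => norm_nonneg _⟩
  constructor
  · intro h z hz
    exact h ▸ ciInf_le hbdd ⟨z, hz⟩
  · intro h
    exact le_antisymm (le_ciInf fun z => h z z.2) (ciInf_le hbdd ⟨p, hp⟩)

section MetricProj

variable {E : Type*} [NormedAddCommGroup E] [InnerProductSpace ℝ E] {K : Set E}

lemma metricProj_spec (hne : K.Nonempty) (hc : IsComplete K) (hcv : Convex ℝ K) (y : E) :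
    metricProj K y ∈ K ∧ ∀ z ∈ K, ‖y - metricProj K y‖ ≤ ‖y - z‖ := by
  obtain ⟨p, hp, hmin⟩ := exists_norm_eq_iInf_of_complete_convex hne hc hcv y
  exact Classical.epsilon_spec (p := fun p => p ∈ K ∧ ∀ z ∈ K, ‖y - p‖ ≤ ‖y - z‖)
    ⟨p, hp, (norm_sub_eq_iInf_iff_forall_norm_sub_le hp).mp hmin⟩

lemma inner_sub_metricProj_sub_metricProj_nonpos (hc : IsComplete K) (hcv : Convex ℝ K)
    (y : E) {z : E} (hz : z ∈ K) :
    inner ℝ (y - metricProj K y) (z - metricProj K y) ≤ (0 : ℝ) := by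
  obtain ⟨hmem, hmin⟩ := metricProj_spec ⟨z, hz⟩ hc hcv y
  exact (norm_eq_iInf_iff_real_inner_le_zero hcv hmem).mp
    ((norm_sub_eq_iInf_iff_forall_norm_sub_le hmem).mpr hmin) z hz

lemma inner_sub_sub_smul_diffQuot_nonpos (hc : IsComplete K) (hcv : Convex ℝ K)
    {b : E} (hb : b ∈ K) (a v : E) {δ : ℝ} (hδ : 0 < δ) :
    let q := δ⁻¹ • (metricProj K (a + δ • v) - a)
    inner ℝ (b - a - δ • q) (v - q) ≤ (0 : ℝ) := by
  intro q
  have hδq : δ • q = metricProj K (a + δ • v) - a := by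
    simp only [q, smul_smul, mul_inv_cancel₀ hδ.ne', one_smul]
  have hvar := inner_sub_metricProj_sub_metricProj_nonpos hc hcv (a + δ • v) hb
  have hres : a + δ • v - metricProj K (a + δ • v) = δ • (v - q) := by
    rw [smul_sub, hδq]; abel
  have hgap : b - metricProj K (a + δ • v) = b - a - δ • q := by
    rw [hδq]; abel
  rw [hres, real_inner_comm, inner_smul_right, hgap] at hvar
  exact nonpos_of_mul_nonpos_right hvar hδ

end MetricProj

theorem inner_sub_vfProj_nonpos_general
    {n : ℕ} (K : Set (EuclideanSpace ℝ (Fin n)))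
    (hKcl : IsClosed K) (hKcv : Convex ℝ K)
    (a b : EuclideanSpace ℝ (Fin n)) (hb : b ∈ K)
    (v w : EuclideanSpace ℝ (Fin n))
    (hw : Tendsto (fun δ : ℝ => δ⁻¹ • (metricProj K (a + δ • v) - a))
      (nhdsWithin 0 (Set.Ioi 0)) (nhds w)) :
    inner ℝ (b - a) (v - w) ≤ (0 : ℝ) := by
  set q := fun δ : ℝ => δ⁻¹ • (metricProj K (a + δ • v) - a)
  have hδq : Tendsto (fun δ : ℝ => δ • q δ) (𝓝[>] 0) (𝓝 0) := by
    simpa using (tendsto_id.mono_left nhdsWithin_le_nhds).smul hw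
  have hlim : Tendsto (fun δ => inner ℝ (b - a - δ • q δ) (v - q δ)) (𝓝[>] 0)
      (𝓝 (inner ℝ (b - a) (v - w))) := by
    simpa using (tendsto_const_nhds.sub hδq).inner (tendsto_const_nhds.sub hw)
  refine le_of_tendsto hlim ?_
  filter_upwards [self_mem_nhdsWithin] with δ hδ
  exact inner_sub_sub_smul_diffQuot_nonpos hKcl.isComplete hKcv hb a v hδ

/-- **Technical lemma on the vector field projection.** For a nonempty closed convex
`K ⊆ ℝⁿ`, points `a, b ∈ K`, `v ∈ ℝⁿ`, and `w = Π_K[a,v]` (the vector field projection,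
i.e. the one-sided limit of `(Ψ_K(a + δ v) - a)/δ` as `δ → 0⁺`), we have
`⟨b - a, v - w⟩ ≤ 0`. -/
theorem inner_sub_vfProj_nonpos
    {n : ℕ} (K : Set (EuclideanSpace ℝ (Fin n)))
    (hKne : K.Nonempty) (hKcl : IsClosed K) (hKcv : Convex ℝ K)
    (a b : EuclideanSpace ℝ (Fin n)) (ha : a ∈ K) (hb : b ∈ K)
    (v w : EuclideanSpace ℝ (Fin n))
    (hw : Tendsto (fun δ : ℝ => δ⁻¹ • (metricProj K (a + δ • v) - a))
      (nhdsWithin 0 (Set.Ioi 0)) (nhds w)) :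
    inner ℝ (b - a) (v - w) ≤ (0 : ℝ) :=
  inner_sub_vfProj_nonpos_general K hKcl hKcv a b hb v w hw
end

section
/- Fix ρ > 0 and let x, z, y, w : [0,∞) → ℝ be differentiable functions satisfying the regularized saddle-flow dynamics for the bilinear Lagrangian L(x,y) = xy: ẋ = −y − (x − z)/ρ, ż = (x − z)/ρ, ẏ = x − (y − w)/ρ, ẇ = (y − w)/ρ for all t ≥ 0. Then (x(t), z(t), y(t), w(t)) → (0, 0, 0, 0) as t → ∞, i.e. the trajectories asymptotically converge to the saddle point of L(x,y) = xy. -/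
/-!
With `Q = x² + z² + y² + w²`, the energy `Q / 2` only dissipates along the regularization
directions: its derivative is `-((x - z)² + (y - w)²) / ρ`. Tilting it by the cross term
`x w - y z`, whose derivative is `-(x z + y w) - 2 (x w - y z) / ρ`, gives for small `ε > 0` a
strict Lyapunov function `V = Q / 2 + ε (x w - y z)` comparable to `Q` with `V' ≤ -(ε / 4) Q`.
Hence `V`, and with it `Q`, decays exponentially.
-/

open Filter Real Topology

theorem le_mul_exp_of_hasDerivAt_le_mul {f f' : ℝ → ℝ} {K : ℝ}
    (hf : ∀ t, 0 ≤ t → HasDerivAt f (f' t) t) (bound : ∀ t, 0 ≤ t → f' t ≤ K * f t)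
    {t : ℝ} (ht : 0 ≤ t) : f t ≤ f 0 * exp (K * t) := by
  have key := le_gronwallBound_of_liminf_deriv_right_le (δ := f 0) (ε := 0) (a := 0) (b := t)
    (fun s hs => (hf s hs.1).continuousAt.continuousWithinAt)
    (fun s hs _ hr => (hf s hs.1).hasDerivWithinAt.liminf_right_slope_le hr) le_rfl
    (fun s hs => by simpa using bound s hs.1) t ⟨ht, le_rfl⟩
  rwa [gronwallBound_ε0, sub_zero] at key

theorem tendsto_zero_of_sq_le {α : Type*} {l : Filter α} {f g : α → ℝ}
    (hg : Tendsto g l (𝓝 0)) (hfg : ∀ᶠ a in l, f a ^ 2 ≤ g a) : Tendsto f l (𝓝 0) := by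
  refine squeeze_zero_norm' ?_ (by simpa using hg.sqrt)
  filter_upwards [hfg] with a ha
  rw [norm_eq_abs, ← sqrt_sq_eq_abs]
  exact sqrt_le_sqrt ha

theorem tendsto_zero_of_sum_sq_tendsto_zero {α : Type*} {l : Filter α} {x z y w : α → ℝ}
    (h : Tendsto (fun a => x a ^ 2 + z a ^ 2 + y a ^ 2 + w a ^ 2) l (𝓝 0)) :
    Tendsto (fun a => (x a, z a, y a, w a)) l (𝓝 (0, 0, 0, 0)) := by
  have of_sq_le {f : α → ℝ} (hf : ∀ a, f a ^ 2 ≤ x a ^ 2 + z a ^ 2 + y a ^ 2 + w a ^ 2) :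
      Tendsto f l (𝓝 0) :=
    tendsto_zero_of_sq_le h (.of_forall hf)
  refine (of_sq_le fun a => ?_).prodMk_nhds ((of_sq_le fun a => ?_).prodMk_nhds
    ((of_sq_le fun a => ?_).prodMk_nhds (of_sq_le fun a => ?_))) <;>
  nlinarith [sq_nonneg (x a), sq_nonneg (z a), sq_nonneg (y a), sq_nonneg (w a)]

noncomputable def saddleLyapunov (ε x z y w : ℝ) : ℝ :=
  (x ^ 2 + z ^ 2 + y ^ 2 + w ^ 2) / 2 + ε * (x * w - y * z)

noncomputable def saddleLyapunovDeriv (ρ ε x z y w : ℝ) : ℝ :=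
  -((x - z) ^ 2 + (y - w) ^ 2) / ρ - ε * (x * z + y * w) - 2 * ε * (x * w - y * z) / ρ

section

variable {ε : ℝ} (hε₀ : 0 ≤ ε) (hε : ε ≤ 1 / 2) (x z y w : ℝ)
include hε₀ hε

theorem sq_sum_le_four_mul_saddleLyapunov :
    (x ^ 2 + z ^ 2 + y ^ 2 + w ^ 2) / 4 ≤ saddleLyapunov ε x z y w := by
  unfold saddleLyapunov
  nlinarith [mul_nonneg hε₀ (sq_nonneg (x + w)), mul_nonneg hε₀ (sq_nonneg (y - z)),
    mul_nonneg (sub_nonneg.2 hε) (by positivity : (0 : ℝ) ≤ x ^ 2 + z ^ 2 + y ^ 2 + w ^ 2)]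

theorem saddleLyapunov_le :
    saddleLyapunov ε x z y w ≤ 3 / 4 * (x ^ 2 + z ^ 2 + y ^ 2 + w ^ 2) := by
  unfold saddleLyapunov
  nlinarith [mul_nonneg hε₀ (sq_nonneg (x - w)), mul_nonneg hε₀ (sq_nonneg (y + z)),
    mul_nonneg (sub_nonneg.2 hε) (by positivity : (0 : ℝ) ≤ x ^ 2 + z ^ 2 + y ^ 2 + w ^ 2)]

end

theorem saddleLyapunovDeriv_le {ρ ε : ℝ} (hρ : 0 < ρ) (hε : 0 ≤ ε)
    (hερ : ε * (ρ ^ 2 + 16) ≤ 2 * ρ) (x z y w : ℝ) :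
    saddleLyapunovDeriv ρ ε x z y w ≤ -(ε / 4) * (x ^ 2 + z ^ 2 + y ^ 2 + w ^ 2) := by
  have key : 0 ≤ ρ ^ 2 *
      (-(ε / 4) * (x ^ 2 + z ^ 2 + y ^ 2 + w ^ 2) - saddleLyapunovDeriv ρ ε x z y w) := by
    unfold saddleLyapunovDeriv
    field_simp
    -- the cross term is `(x - z) w - z (y - w)`; absorb it by AM-GM into the dissipation
    nlinarith [mul_nonneg hε (sq_nonneg (ρ * w + 8 * (x - z))),
      mul_nonneg hε (sq_nonneg (ρ * z - 8 * (y - w))),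
      mul_nonneg (sub_nonneg.2 hερ) (add_nonneg (sq_nonneg (x - z)) (sq_nonneg (y - w))),
      mul_nonneg (mul_nonneg hε (sq_nonneg ρ)) (add_nonneg (sq_nonneg x) (sq_nonneg y)),
      mul_nonneg (mul_nonneg hε (sq_nonneg ρ)) (add_nonneg (sq_nonneg z) (sq_nonneg w))]
  exact sub_nonneg.1 (nonneg_of_mul_nonneg_right key (by positivity))

theorem hasDerivAt_saddleLyapunov {ρ ε t : ℝ} {x z y w : ℝ → ℝ}
    (hx : HasDerivAt x (-(y t) - (x t - z t) / ρ) t) (hz : HasDerivAt z ((x t - z t) / ρ) t)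
    (hy : HasDerivAt y (x t - (y t - w t) / ρ) t) (hw : HasDerivAt w ((y t - w t) / ρ) t) :
    HasDerivAt (fun s => saddleLyapunov ε (x s) (z s) (y s) (w s))
      (saddleLyapunovDeriv ρ ε (x t) (z t) (y t) (w t)) t := by
  have := ((((hx.pow 2).add (hz.pow 2)).add (hy.pow 2)).add (hw.pow 2)).div_const 2 |>.add
    (((hx.mul hw).sub (hy.mul hz)).const_mul ε)
  refine this.congr_deriv ?_
  unfold saddleLyapunovDeriv
  ring

theorem saddleFlow_sq_sum_le {ρ ε : ℝ} (hρ : 0 < ρ) (hε : 0 ≤ ε)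
    (hερ : ε * (ρ ^ 2 + 16) ≤ 2 * ρ) {x z y w : ℝ → ℝ}
    (hx : ∀ t : ℝ, 0 ≤ t → HasDerivAt x (-(y t) - (x t - z t) / ρ) t)
    (hz : ∀ t : ℝ, 0 ≤ t → HasDerivAt z ((x t - z t) / ρ) t)
    (hy : ∀ t : ℝ, 0 ≤ t → HasDerivAt y (x t - (y t - w t) / ρ) t)
    (hw : ∀ t : ℝ, 0 ≤ t → HasDerivAt w ((y t - w t) / ρ) t) {t : ℝ} (ht : 0 ≤ t) :
    x t ^ 2 + z t ^ 2 + y t ^ 2 + w t ^ 2 ≤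
      4 * (saddleLyapunov ε (x 0) (z 0) (y 0) (w 0) * exp (-(ε / 3) * t)) := by
  have hε_half : ε ≤ 1 / 2 := by nlinarith [mul_nonneg hε (sq_nonneg (ρ - 4))]
  have hdecay := le_mul_exp_of_hasDerivAt_le_mul
    (fun s hs => hasDerivAt_saddleLyapunov (hx s hs) (hz s hs) (hy s hs) (hw s hs))
    (fun s _ => calc
      _ ≤ -(ε / 4) * (x s ^ 2 + z s ^ 2 + y s ^ 2 + w s ^ 2) :=
        saddleLyapunovDeriv_le hρ hε hερ _ _ _ _
      _ = -(ε / 3) * (3 / 4 * (x s ^ 2 + z s ^ 2 + y s ^ 2 + w s ^ 2)) := by ring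
      _ ≤ -(ε / 3) * saddleLyapunov ε (x s) (z s) (y s) (w s) :=
        mul_le_mul_of_nonpos_left (saddleLyapunov_le hε hε_half _ _ _ _) (by linarith)) ht
  linarith [sq_sum_le_four_mul_saddleLyapunov hε hε_half (x t) (z t) (y t) (w t)]

/-- **Convergence of the regularized saddle-flow dynamics for `L(x,y) = xy`.**
For `ρ > 0`, trajectories of `ẋ = −y − (x−z)/ρ`, `ż = (x−z)/ρ`, `ẏ = x − (y−w)/ρ`,
`ẇ = (y−w)/ρ` (for all `t ≥ 0`) asymptotically converge to `(0,0,0,0)`, the saddle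
point of the bilinear Lagrangian `L(x,y) = xy`. -/
theorem regularized_saddle_flow_bilinear_convergence
    (ρ : ℝ) (hρ : 0 < ρ) (x z y w : ℝ → ℝ)
    (hx : ∀ t : ℝ, 0 ≤ t → HasDerivAt x (-(y t) - (x t - z t) / ρ) t)
    (hz : ∀ t : ℝ, 0 ≤ t → HasDerivAt z ((x t - z t) / ρ) t)
    (hy : ∀ t : ℝ, 0 ≤ t → HasDerivAt y (x t - (y t - w t) / ρ) t)
    (hw : ∀ t : ℝ, 0 ≤ t → HasDerivAt w ((y t - w t) / ρ) t) :
    Tendsto (fun t => (x t, z t, y t, w t)) atTop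
      (nhds ((0 : ℝ), (0 : ℝ), (0 : ℝ), (0 : ℝ))) := by
  set ε := 2 * ρ / (ρ ^ 2 + 16)
  have hε : 0 < ε := by positivity
  have hερ : ε * (ρ ^ 2 + 16) ≤ 2 * ρ := (div_mul_cancel₀ _ (by positivity)).le
  have hbound : Tendsto (fun t => 4 * (saddleLyapunov ε (x 0) (z 0) (y 0) (w 0) *
      exp (-(ε / 3) * t))) atTop (𝓝 0) := by
    have hexp : Tendsto (fun t => exp (-(ε / 3) * t)) atTop (𝓝 0) :=
      tendsto_exp_atBot.comp (tendsto_id.const_mul_atTop_of_neg (by linarith))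
    simpa using (hexp.const_mul _).const_mul 4
  refine tendsto_zero_of_sum_sq_tendsto_zero (squeeze_zero' (.of_forall fun t => by positivity)
    ?_ hbound)
  filter_upwards [eventually_ge_atTop 0] with t ht
  exact saddleFlow_sq_sum_le hρ hε.le hερ hx hz hy hw ht
end

section
/- Consider finite CMDP data and let λ ∈ Δ satisfy the flow conservation constraint Σ_{a∈A} (I − γP_a^T) λ_a = (1−γ)q, and suppose σ(s) := Σ_{a∈A} λ(s,a) > 0 for every s ∈ S. Define the recovered stationary policy π(a|s) = λ(s,a)/σ(s). Then the occupancy measure of π equals λ, i.e. λ^π = λ. -/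
open Finset

/-- The state-action distributions `d_t` of a stationary policy `π` in a finite MDP:
`d_0(s,a) = q(s)π(a|s)` and `d_{t+1}(s',a') = π(a'|s') Σ_{s,a} P(s'|s,a) d_t(s,a)`. -/
noncomputable def stateActionDist {S A : Type*} [Fintype S] [Fintype A]
    (P : A → S → S → ℝ) (q : S → ℝ) (π : S → A → ℝ) : ℕ → S × A → ℝ
  | 0 => fun p => q p.1 * π p.1 p.2
  | (t + 1) => fun p =>
      π p.1 p.2 * ∑ p' : S × A, P p'.2 p'.1 p.1 * stateActionDist P q π t p'

/-- The state-marginal transition operator of policy `π`. -/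
noncomputable def PRTop {S A : Type*} [Fintype S] [Fintype A]
    (P : A → S → S → ℝ) (π : S → A → ℝ) (f : S → ℝ) : S → ℝ :=
  fun s => ∑ p : S × A, P p.2 p.1 s * (π p.1 p.2 * f p.1)

lemma sad_eq {S A : Type*} [Fintype S] [Fintype A]
    (P : A → S → S → ℝ) (q : S → ℝ) (π : S → A → ℝ) :
    ∀ t p, stateActionDist P q π t p = π p.1 p.2 * (PRTop P π)^[t] q p.1 := by
  intro t
  induction t with
  | zero => intro p; simp [stateActionDist, mul_comm]
  | succ t ih =>
    intro p
    simp only [stateActionDist, Function.iterate_succ_apply', PRTop]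
    simp only [ih]

lemma PRTop_sum {S A : Type*} [Fintype S] [Fintype A]
    (P : A → S → S → ℝ) (hProw : ∀ a s, ∑ s', P a s s' = 1)
    (π : S → A → ℝ) (hπ1 : ∀ s, ∑ a, π s a = 1) (f : S → ℝ) :
    ∑ s, PRTop P π f s = ∑ s, f s := by
  simp only [PRTop]
  rw [Finset.sum_comm]
  have h1 : ∀ p : S × A, ∑ s, P p.2 p.1 s * (π p.1 p.2 * f p.1)
      = π p.1 p.2 * f p.1 := by
    intro p; rw [← Finset.sum_mul, hProw, one_mul]
  rw [Finset.sum_congr rfl fun p _ => h1 p, Fintype.sum_prod_type]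
  refine Finset.sum_congr rfl fun s _ => ?_
  show ∑ a : A, π s a * f s = f s
  rw [← Finset.sum_mul, hπ1, one_mul]

lemma PRTop_nonneg {S A : Type*} [Fintype S] [Fintype A]
    (P : A → S → S → ℝ) (hPnn : ∀ a s s', 0 ≤ P a s s')
    (π : S → A → ℝ) (hπnn : ∀ s a, 0 ≤ π s a) (f : S → ℝ) (hf : ∀ s, 0 ≤ f s) :
    ∀ s, 0 ≤ PRTop P π f s := by
  intro s
  exact Finset.sum_nonneg fun p _ =>
    mul_nonneg (hPnn _ _ _) (mul_nonneg (hπnn _ _) (hf _))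

/-- **Policy recovery from an occupancy measure.** For a finite MDP, if `λ ∈ Δ` satisfies
the flow conservation constraint `Σ_a (I − γ P_a^T) λ_a = (1−γ) q` and has positive state
marginals `σ(s) = Σ_a λ(s,a) > 0`, then the stationary policy `π(a|s) = λ(s,a)/σ(s)`
has occupancy measure `λ^π = (1−γ) Σ_t γ^t d_t` equal to `λ`. -/
theorem recovered_policy_occupancy_measure
    {S A : Type*} [Fintype S] [Fintype A]
    (P : A → S → S → ℝ)                     -- P a s s' = P(s' | s, a)
    (hPnn : ∀ a s s', 0 ≤ P a s s') (hProw : ∀ a s, ∑ s', P a s s' = 1)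
    (γ : ℝ) (hγ : γ ∈ Set.Ioo (0 : ℝ) 1)
    (q : S → ℝ) (hq : ∀ s, 0 ≤ q s) (hq1 : ∑ s, q s = 1)
    (lam : S × A → ℝ)
    (hlamnn : ∀ p, 0 ≤ lam p) (hlam1 : ∑ p : S × A, lam p = 1)
    (hflow : ∀ s : S, ∑ a : A,
      (lam (s, a) - γ * ∑ s', P a s' s * lam (s', a)) = (1 - γ) * q s)
    (hσpos : ∀ s : S, 0 < ∑ a : A, lam (s, a))
    (π : S → A → ℝ) (hπ : ∀ s a, π s a = lam (s, a) / ∑ a' : A, lam (s, a')) :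
    (1 - γ) • ∑' t : ℕ, (γ ^ t) • stateActionDist P q π t = lam := by
  obtain ⟨hγ0, hγ1⟩ := hγ
  have hγne : (1 : ℝ) - γ ≠ 0 := by linarith
  set σ : S → ℝ := fun s => ∑ a : A, lam (s, a) with hσdef
  have hσnn : ∀ s, 0 ≤ σ s := fun s => (hσpos s).le
  have hπnn : ∀ s a, 0 ≤ π s a := fun s a => by
    rw [hπ]; exact div_nonneg (hlamnn _) (hσpos s).le
  have hπσ : ∀ s a, π s a * σ s = lam (s, a) := fun s a => by
    simp only [hπ, hσdef]
    exact div_mul_cancel₀ _ (hσpos s).ne'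
  have hπ1 : ∀ s, ∑ a, π s a = 1 := fun s => by
    simp only [hπ]
    rw [← Finset.sum_div, div_self (hσpos s).ne']
  set T : (S → ℝ) → S → ℝ := PRTop P π with hT
  set m : ℕ → S → ℝ := fun t => T^[t] q with hm
  set w : ℕ → S → ℝ := fun t => T^[t] σ with hw
  have hmnn : ∀ t s, 0 ≤ m t s := by
    intro t
    induction t with
    | zero => simpa [hm] using hq
    | succ t ih =>
      intro s
      simp only [hm, Function.iterate_succ_apply']
      exact PRTop_nonneg P hPnn π hπnn _ (by simpa [hm] using ih) s
  have hwnn : ∀ t s, 0 ≤ w t s := by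
    intro t
    induction t with
    | zero => simpa [hw] using hσnn
    | succ t ih =>
      intro s
      simp only [hw, Function.iterate_succ_apply']
      exact PRTop_nonneg P hPnn π hπnn _ (by simpa [hw] using ih) s
  have hmsum : ∀ t, ∑ s, m t s = 1 := by
    intro t
    induction t with
    | zero => simpa [hm] using hq1
    | succ t ih =>
      simp only [hm, Function.iterate_succ_apply']
      rw [PRTop_sum P hProw π hπ1]
      simpa [hm] using ih
  have hσsum : ∑ s, σ s = 1 := by
    rw [hσdef, ← Fintype.sum_prod_type]
    simpa using hlam1
  have hwsum : ∀ t, ∑ s, w t s = 1 := by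
    intro t
    induction t with
    | zero => simpa [hw] using hσsum
    | succ t ih =>
      simp only [hw, Function.iterate_succ_apply']
      rw [PRTop_sum P hProw π hπ1]
      simpa [hw] using ih
  have hmle : ∀ t s, m t s ≤ 1 := by
    intro t s
    calc m t s ≤ ∑ s', m t s' :=
          Finset.single_le_sum (fun s' _ => hmnn t s') (Finset.mem_univ s)
      _ = 1 := hmsum t
  have hwle : ∀ t s, w t s ≤ 1 := by
    intro t s
    calc w t s ≤ ∑ s', w t s' :=
          Finset.single_le_sum (fun s' _ => hwnn t s') (Finset.mem_univ s)
      _ = 1 := hwsum t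
  -- fixed point equation
  have hfix : ∀ s, σ s = (1 - γ) * q s + γ * T σ s := by
    intro s
    have hTσ : T σ s = ∑ a, ∑ s', P a s' s * lam (s', a) := by
      rw [hT]
      simp only [PRTop]
      rw [Fintype.sum_prod_type, Finset.sum_comm]
      refine Finset.sum_congr rfl fun a _ => Finset.sum_congr rfl fun s' _ => ?_
      rw [hπσ s' a]
    have hf := hflow s
    rw [Finset.sum_sub_distrib, ← Finset.mul_sum] at hf
    rw [hTσ]
    have : σ s = ∑ a, lam (s, a) := rfl
    linarith
  -- step identity
  have hstep : ∀ n s, w n s = (1 - γ) * m n s + γ * w (n + 1) s := by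
    intro n
    induction n with
    | zero =>
      intro s
      have h0 : w 0 s = σ s := rfl
      have h1 : w 1 s = T σ s := by
        simp [hw]
      have h2 : m 0 s = q s := rfl
      rw [h0, h1, h2]
      exact hfix s
    | succ n ih =>
      intro s
      have h1 : w (n + 1) s = ∑ p : S × A, P p.2 p.1 s * (π p.1 p.2 * w n p.1) := by
        simp only [hw, Function.iterate_succ_apply']; rfl
      calc w (n + 1) s
          = ∑ p : S × A, P p.2 p.1 s *
              (π p.1 p.2 * ((1 - γ) * m n p.1 + γ * w (n + 1) p.1)) := by
            rw [h1]
            exact Finset.sum_congr rfl fun p _ => by rw [ih p.1]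
        _ = (1 - γ) * (∑ p : S × A, P p.2 p.1 s * (π p.1 p.2 * m n p.1))
            + γ * (∑ p : S × A, P p.2 p.1 s * (π p.1 p.2 * w (n + 1) p.1)) := by
            rw [Finset.mul_sum, Finset.mul_sum, ← Finset.sum_add_distrib]
            exact Finset.sum_congr rfl fun p _ => by ring
        _ = (1 - γ) * m (n + 1) s + γ * w (n + 2) s := by
            have hA : m (n + 1) s
                = ∑ p : S × A, P p.2 p.1 s * (π p.1 p.2 * m n p.1) := by
              simp only [hm, Function.iterate_succ_apply']; rfl
            have hB : w (n + 2) s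
                = ∑ p : S × A, P p.2 p.1 s * (π p.1 p.2 * w (n + 1) p.1) := by
              simp only [hw, Function.iterate_succ_apply']; rfl
            rw [hA, hB]
  -- telescoping
  have htel : ∀ n s, σ s
      = (1 - γ) * ∑ k ∈ Finset.range n, γ ^ k * m k s + γ ^ n * w n s := by
    intro n
    induction n with
    | zero =>
      intro s
      simp [hw]
    | succ n ih =>
      intro s
      calc σ s = (1 - γ) * ∑ k ∈ Finset.range n, γ ^ k * m k s + γ ^ n * w n s := ih s
        _ = (1 - γ) * ∑ k ∈ Finset.range n, γ ^ k * m k s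
            + γ ^ n * ((1 - γ) * m n s + γ * w (n + 1) s) := by rw [← hstep n s]
        _ = (1 - γ) * ∑ k ∈ Finset.range (n + 1), γ ^ k * m k s
            + γ ^ (n + 1) * w (n + 1) s := by
            rw [Finset.sum_range_succ]; ring
  -- tail tends to zero
  have hpow : Filter.Tendsto (fun n : ℕ => γ ^ n) Filter.atTop (nhds 0) :=
    tendsto_pow_atTop_nhds_zero_of_lt_one hγ0.le hγ1
  have htend : ∀ s, Filter.Tendsto (fun n => γ ^ n * w n s) Filter.atTop (nhds 0) := by
    intro s
    refine squeeze_zero (fun n => mul_nonneg (pow_nonneg hγ0.le n) (hwnn n s))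
      (fun n => ?_) hpow
    calc γ ^ n * w n s ≤ γ ^ n * 1 :=
          mul_le_mul_of_nonneg_left (hwle n s) (pow_nonneg hγ0.le n)
      _ = γ ^ n := mul_one _
  -- partial sums converge
  have hps : ∀ s, Filter.Tendsto (fun n => ∑ k ∈ Finset.range n, γ ^ k * m k s)
      Filter.atTop (nhds (σ s / (1 - γ))) := by
    intro s
    have heq : ∀ n, ∑ k ∈ Finset.range n, γ ^ k * m k s
        = (σ s - γ ^ n * w n s) / (1 - γ) := by
      intro n
      have := htel n s
      field_simp
      linarith
    have h' := (Filter.Tendsto.sub (tendsto_const_nhds (x := σ s)) (htend s)).div_const (1 - γ)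
    rw [sub_zero] at h'
    exact h'.congr fun n => (heq n).symm
  have hsumm : ∀ s, Summable (fun t => γ ^ t * m t s) := by
    intro s
    refine Summable.of_nonneg_of_le
      (fun t => mul_nonneg (pow_nonneg hγ0.le t) (hmnn t s))
      (fun t => ?_) (summable_geometric_of_lt_one hγ0.le hγ1)
    calc γ ^ t * m t s ≤ γ ^ t * 1 :=
          mul_le_mul_of_nonneg_left (hmle t s) (pow_nonneg hγ0.le t)
      _ = γ ^ t := mul_one _
  have hHasM : ∀ s, HasSum (fun t => γ ^ t * m t s) (σ s / (1 - γ)) := by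
    intro s
    exact (hsumm s).hasSum_iff_tendsto_nat.mpr (hps s)
  -- per-coordinate HasSum for the state-action distributions
  have hsad : ∀ t (p : S × A), stateActionDist P q π t p = π p.1 p.2 * m t p.1 :=
    fun t p => sad_eq P q π t p
  have hHas : ∀ p : S × A,
      HasSum (fun t => (γ ^ t • stateActionDist P q π t) p)
        (π p.1 p.2 * (σ p.1 / (1 - γ))) := by
    intro p
    have h := (hHasM p.1).mul_left (π p.1 p.2)
    have heq : (fun t => (γ ^ t • stateActionDist P q π t) p)
        = fun t => π p.1 p.2 * (γ ^ t * m t p.1) := by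
      funext t
      simp only [Pi.smul_apply, smul_eq_mul, hsad t p]
      ring
    rw [heq]
    exact h
  have hfs : ∀ p : S × A, Summable fun t => (γ ^ t • stateActionDist P q π t) p :=
    fun p => (hHas p).summable
  funext p
  rw [Pi.smul_apply, smul_eq_mul, tsum_apply (Pi.summable.mpr hfs), (hHas p).tsum_eq]
  have hl : π p.1 p.2 * σ p.1 = lam p := by
    have h := hπσ p.1 p.2
    simpa using h
  rw [← hl]
  field_simp
end
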